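/- Fix α ∈ (0,1/2) and γ ∈ (0,α). Let Y = (Yβ, Yδ′)′ ∼ N((β, δ′)′, Ω) with δ ≥ 0, and let s ⊆ {1,…,k} be an index subset (possibly empty) such that every entry of the row vector a := Ω_{βδ^{(s)}}Ω_{δ^{(s)}δ^{(s)}}^{-1} is non-negative. Put ω := Ω_{βδ^{(s)}}Ω_{δ^{(s)}δ^{(s)}}^{-1}Ω_{δ^{(s)}β} ∈ [0,1) and let c(ω) be the constant satisfying P(Z1 > min{z_{1−α+γ}, Z̃2 + c(ω)}) = α for a centered bivariate Gaussian (Z1, Z̃2) with covariance [[1, ω], [ω, ω]]. Then 1−α ≤ P(β ≥ Yβ − min{z_{1−α+γ}, a·Yδ^{(s)} + c(ω)}) ≤ 1−α+γ for all β ∈ ℝ and δ ≥ 0. -/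

import Mathlib

open MeasureTheory ProbabilityTheory Real Matrix

/-- The standard normal distribution on `ℝ`. -/
noncomputable def stdNormal : Measure ℝ := gaussianReal 0 1

/-- The product of two independent standard normals on `ℝ × ℝ`. -/
noncomputable def stdNormal2 : Measure (ℝ × ℝ) := stdNormal.prod stdNormal

/-- For `ω ∈ [0,1)`, `Z̃₂ p = ω * p.1 + √(ω - ω²) * p.2` so that, under `stdNormal2`,
`(Z₁, Z̃₂) = (p.1, Z̃₂ p)` is centered Gaussian with covariance `[[1, ω], [ω, ω]]`. -/
noncomputable def Ztilde2 (ω : ℝ) (p : ℝ × ℝ) : ℝ := ω * p.1 + Real.sqrt (ω - ω ^ 2) * p.2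

/-- The coefficient vector `Ω_{δ⁽ˢ⁾δ⁽ˢ⁾}⁻¹ Ω_{δ⁽ˢ⁾β}`; by symmetry of `Ω` its entries are those
of the row vector `Ω_{βδ⁽ˢ⁾} Ω_{δ⁽ˢ⁾δ⁽ˢ⁾}⁻¹`.  Index `0` corresponds to `β` and index `j.succ`
to `δ_j`. -/
noncomputable def coefVec {k : ℕ} (Ω : Matrix (Fin (k + 1)) (Fin (k + 1)) ℝ)
    (s : Finset (Fin k)) : {i // i ∈ s} → ℝ :=
  (Matrix.of fun i j : {i // i ∈ s} => Ω i.1.succ j.1.succ)⁻¹.mulVec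
    fun j : {i // i ∈ s} => Ω j.1.succ 0

/-- `ω(s) = Ω_{βδ⁽ˢ⁾} Ω_{δ⁽ˢ⁾δ⁽ˢ⁾}⁻¹ Ω_{δ⁽ˢ⁾β}`. -/
noncomputable def omegaOf {k : ℕ} (Ω : Matrix (Fin (k + 1)) (Fin (k + 1)) ℝ)
    (s : Finset (Fin k)) : ℝ :=
  ∑ j : {i // i ∈ s}, coefVec Ω s j * Ω 0 j.1.succ

/-- The law of `Y = (Yβ, Yδ')' ~ N((β, δ')', Ω)`, realized as the image of a vector of `k + 1`
independent standard normals under the affine map `x ↦ mean + R x`, where `R Rᵀ = Ω`. -/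
noncomputable def gaussLaw {k : ℕ} (R : Matrix (Fin (k + 1)) (Fin (k + 1)) ℝ)
    (β : ℝ) (δ : Fin k → ℝ) : Measure (Fin (k + 1) → ℝ) :=
  Measure.map (fun x (i : Fin (k + 1)) => Fin.cases β δ i + ∑ j, R i j * x j)
    (Measure.pi fun _ : Fin (k + 1) => stdNormal)

/-!
Write `Y = (β, δ) + R x` with `x` standard normal. Then `Yβ - β = u ⬝ᵥ x` and
`a ⬝ᵥ Yδ⁽ˢ⁾ = a ⬝ᵥ δ⁽ˢ⁾ + v ⬝ᵥ x` for `u = R 0` and `v = a ᵥ* R⁽ˢ⁾`, and `R Rᵀ = Ω` together with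
`Ω_{δ⁽ˢ⁾δ⁽ˢ⁾} a = Ω_{δ⁽ˢ⁾β}` gives `‖u‖² = 1`, `⟪u, v⟫ = ‖v‖² = ω`. A pair of linear forms of a
standard Gaussian vector has a law determined by their Gram matrix (compare characteristic
functions), so `(u ⬝ᵥ x, v ⬝ᵥ x)` has the law of `(Z₁, Z̃₂)`. The coverage event is
`Z₁ ≤ min z (a ⬝ᵥ δ⁽ˢ⁾ + Z̃₂ + c)`; since `a ⬝ᵥ δ⁽ˢ⁾ ≥ 0` it contains `Z₁ ≤ min z (Z̃₂ + c)`, of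
probability `1 - α` by the choice of `c`, and it is contained in `Z₁ ≤ z`, of probability
`1 - α + γ`.
-/

open scoped RealInnerProductSpace

instance : IsProbabilityMeasure stdNormal :=
  inferInstanceAs (IsProbabilityMeasure (gaussianReal 0 1))

section InnerPair

variable {E : Type*} [NormedAddCommGroup E] [InnerProductSpace ℝ E]

noncomputable def innerPairCLM (u v : E) : E →L[ℝ] ℝ × ℝ := (innerSL ℝ u).prod (innerSL ℝ v)

lemma comp_innerPairCLM (L : StrongDual ℝ (ℝ × ℝ)) (u v : E) :
    L.comp (innerPairCLM u v) = innerSL ℝ (L (1, 0) • u + L (0, 1) • v) := by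
  ext x
  have : ((⟪u, x⟫, ⟪v, x⟫) : ℝ × ℝ) = ⟪u, x⟫ • (1, 0) + ⟪v, x⟫ • (0, 1) := by simp
  simp only [ContinuousLinearMap.comp_apply, innerPairCLM, ContinuousLinearMap.prod_apply,
    this, map_add, map_smul, _root_.add_apply, _root_.smul_apply,
    innerSL_apply_apply, smul_eq_mul]
  ring

lemma norm_sq_smul_add_smul (a b : ℝ) (u v : E) :
    ‖a • u + b • v‖ ^ 2 = a ^ 2 * ⟪u, u⟫ + 2 * a * b * ⟪u, v⟫ + b ^ 2 * ⟪v, v⟫ := by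
  rw [← real_inner_self_eq_norm_sq]
  simp only [inner_add_left, inner_add_right, real_inner_smul_left, real_inner_smul_right,
    real_inner_comm u v]
  ring

variable [FiniteDimensional ℝ E] [MeasurableSpace E] [BorelSpace E]
  {F : Type*} [NormedAddCommGroup F] [InnerProductSpace ℝ F] [FiniteDimensional ℝ F]
  [MeasurableSpace F] [BorelSpace F]

lemma stdGaussian_map_innerPair_eq {u v : E} {u' v' : F} (huu : ⟪u, u⟫ = ⟪u', u'⟫)
    (huv : ⟪u, v⟫ = ⟪u', v'⟫) (hvv : ⟪v, v⟫ = ⟪v', v'⟫) :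
    (stdGaussian E).map (innerPairCLM u v) = (stdGaussian F).map (innerPairCLM u' v') := by
  refine Measure.ext_of_charFunDual (funext fun L => ?_)
  rw [charFunDual_map, charFunDual_map, charFunDual_stdGaussian, charFunDual_stdGaussian,
    comp_innerPairCLM, comp_innerPairCLM, innerSL_apply_norm, innerSL_apply_norm,
    ← Complex.ofReal_pow, ← Complex.ofReal_pow, norm_sq_smul_add_smul, norm_sq_smul_add_smul,
    huu, huv, hvv]

end InnerPair

lemma map_pi_stdNormal_dotProduct_pair {ι : Type*} [Fintype ι] (u v : ι → ℝ) :
    (Measure.pi fun _ : ι => stdNormal).map (fun x => (u ⬝ᵥ x, v ⬝ᵥ x)) =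
      (stdGaussian (EuclideanSpace ℝ ι)).map
        (innerPairCLM (WithLp.toLp 2 u) (WithLp.toLp 2 v)) := by
  rw [← map_pi_eq_stdGaussian, Measure.map_map (by fun_prop) (by fun_prop)]
  congr 1
  funext x
  simp [innerPairCLM, EuclideanSpace.inner_eq_star_dotProduct, dotProduct_comm]

lemma map_pi_stdNormal_dotProduct_pair_eq {ι ι' : Type*} [Fintype ι] [Fintype ι']
    {u v : ι → ℝ} {u' v' : ι' → ℝ} (huu : u ⬝ᵥ u = u' ⬝ᵥ u') (huv : u ⬝ᵥ v = u' ⬝ᵥ v')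
    (hvv : v ⬝ᵥ v = v' ⬝ᵥ v') :
    (Measure.pi fun _ : ι => stdNormal).map (fun x => (u ⬝ᵥ x, v ⬝ᵥ x)) =
      (Measure.pi fun _ : ι' => stdNormal).map (fun x => (u' ⬝ᵥ x, v' ⬝ᵥ x)) := by
  rw [map_pi_stdNormal_dotProduct_pair, map_pi_stdNormal_dotProduct_pair]
  apply stdGaussian_map_innerPair_eq <;>
    simpa only [EuclideanSpace.inner_toLp_toLp, star_trivial, dotProduct_comm v,
      dotProduct_comm v']

instance : IsProbabilityMeasure stdNormal2 := by unfold stdNormal2; infer_instance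

@[fun_prop]
lemma measurable_Ztilde2 (ω : ℝ) : Measurable (Ztilde2 ω) := by unfold Ztilde2; fun_prop

lemma stdNormal2_eq_map_pi :
    stdNormal2 = (Measure.pi fun _ : Fin 2 => stdNormal).map MeasurableEquiv.finTwoArrow :=
  (measurePreserving_finTwoArrow stdNormal).map_eq.symm

lemma map_pi_stdNormal_dotProduct_pair_eq_Ztilde2 {ι : Type*} [Fintype ι] {u v : ι → ℝ} {ω : ℝ}
    (hω : ω ∈ Set.Icc (0 : ℝ) 1) (huu : u ⬝ᵥ u = 1) (huv : u ⬝ᵥ v = ω) (hvv : v ⬝ᵥ v = ω) :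
    (Measure.pi fun _ : ι => stdNormal).map (fun x => (u ⬝ᵥ x, v ⬝ᵥ x)) =
      stdNormal2.map (fun p => (p.1, Ztilde2 ω p)) := by
  have hr : √(ω - ω ^ 2) ^ 2 = ω - ω ^ 2 := Real.sq_sqrt (by nlinarith [hω.1, hω.2])
  have hZ : (fun p : ℝ × ℝ => (p.1, Ztilde2 ω p)) ∘ MeasurableEquiv.finTwoArrow =
      fun x : Fin 2 → ℝ => (![1, 0] ⬝ᵥ x, ![ω, √(ω - ω ^ 2)] ⬝ᵥ x) := by
    funext x
    simp [Ztilde2, dotProduct, Fin.sum_univ_two]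
  rw [stdNormal2_eq_map_pi, Measure.map_map (by fun_prop) (by fun_prop), hZ]
  apply map_pi_stdNormal_dotProduct_pair_eq
  · simp [huu]
  · simp [huv]
  · simp [hvv, ← sq, hr]

lemma map_Ztilde2_setOf_le_min (ω z c : ℝ) :
    stdNormal2.map (fun p => (p.1, Ztilde2 ω p)) {q | q.1 ≤ min z (q.2 + c)} =
      1 - stdNormal2 {p | min z (Ztilde2 ω p + c) < p.1} := by
  rw [Measure.map_apply (by fun_prop) (measurableSet_le (by fun_prop) (by fun_prop)),
    ← prob_compl_eq_one_sub (measurableSet_lt (by fun_prop) (by fun_prop))]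
  congr 1
  ext p
  simp

lemma map_Ztilde2_setOf_fst_le (ω z : ℝ) :
    stdNormal2.map (fun p => (p.1, Ztilde2 ω p)) {q | q.1 ≤ z} = stdNormal (Set.Iic z) := by
  rw [Measure.map_apply (by fun_prop) (measurableSet_le (by fun_prop) (by fun_prop))]
  have : (fun p : ℝ × ℝ => (p.1, Ztilde2 ω p)) ⁻¹' {q | q.1 ≤ z} = Set.Iic z ×ˢ Set.univ := by
    ext p; simp
  rw [this, stdNormal2, Measure.prod_prod, measure_univ, mul_one]

section Regression

variable {k : ℕ} {Ω R : Matrix (Fin (k + 1)) (Fin (k + 1)) ℝ} {s : Finset (Fin k)}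

variable (s) in
def deltaIndex : {i // i ∈ s} → Fin (k + 1) := fun i => i.1.succ

variable (R s) in
noncomputable def deltaRows : Matrix {i // i ∈ s} (Fin (k + 1)) ℝ :=
  R.submatrix (deltaIndex s) id

lemma row_dotProduct_row (hR : R * Rᵀ = Ω) (p q : Fin (k + 1)) : R p ⬝ᵥ R q = Ω p q :=
  congrFun (congrFun hR p) q

lemma deltaRows_mul_transpose (hR : R * Rᵀ = Ω) :
    deltaRows R s * (deltaRows R s)ᵀ = Ω.submatrix (deltaIndex s) (deltaIndex s) := by
  rw [← hR, deltaRows, transpose_submatrix, submatrix_mul _ _ _ _ _ Function.bijective_id]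

lemma mulVec_coefVec (hpd : Ω.PosDef) :
    Ω.submatrix (deltaIndex s) (deltaIndex s) *ᵥ coefVec Ω s = fun j => Ω (deltaIndex s j) 0 := by
  have hinj : Function.Injective (deltaIndex s) := fun i j h =>
    Subtype.ext (Fin.succ_injective k h)
  have hB : IsUnit (Ω.submatrix (deltaIndex s) (deltaIndex s)).det :=
    (isUnit_iff_isUnit_det _).mp (hpd.submatrix hinj).isUnit
  have hcoef : coefVec Ω s =
      (Ω.submatrix (deltaIndex s) (deltaIndex s))⁻¹ *ᵥ fun j => Ω (deltaIndex s j) 0 := rfl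
  rw [hcoef, mulVec_mulVec, mul_nonsing_inv _ hB, one_mulVec]

lemma omegaOf_eq_coefVec_dotProduct (hΩ : Ω.IsSymm) :
    omegaOf Ω s = coefVec Ω s ⬝ᵥ fun j => Ω (deltaIndex s j) 0 :=
  Finset.sum_congr rfl fun j _ => by rw [hΩ.apply]; rfl

lemma row_zero_dotProduct_coefVec_vecMul (hR : R * Rᵀ = Ω) :
    R 0 ⬝ᵥ (coefVec Ω s ᵥ* deltaRows R s) = omegaOf Ω s := by
  rw [dotProduct_comm, ← dotProduct_mulVec]
  refine Finset.sum_congr rfl fun j _ => ?_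
  change _ * (R j.1.succ ⬝ᵥ R 0) = _
  rw [dotProduct_comm, row_dotProduct_row hR]

lemma coefVec_vecMul_dotProduct_self (hpd : Ω.PosDef) (hR : R * Rᵀ = Ω) :
    (coefVec Ω s ᵥ* deltaRows R s) ⬝ᵥ (coefVec Ω s ᵥ* deltaRows R s) = omegaOf Ω s := by
  rw [← dotProduct_mulVec, ← mulVec_transpose, mulVec_mulVec, deltaRows_mul_transpose hR,
    mulVec_coefVec hpd, omegaOf_eq_coefVec_dotProduct (hR ▸ isSymm_mul_transpose_self R)]

end Regression

lemma gaussLaw_setOf_sub_min_le {k : ℕ} (R : Matrix (Fin (k + 1)) (Fin (k + 1)) ℝ) (β : ℝ)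
    (δ : Fin k → ℝ) {s : Finset (Fin k)} (a : {i // i ∈ s} → ℝ) (z c : ℝ) :
    gaussLaw R β δ {y | y 0 - min z ((∑ j, a j * y j.1.succ) + c) ≤ β} =
      (Measure.pi fun _ => stdNormal).map (fun x => (R 0 ⬝ᵥ x, (a ᵥ* deltaRows R s) ⬝ᵥ x))
        {q | q.1 ≤ min z ((∑ j, a j * δ j) + q.2 + c)} := by
  rw [gaussLaw, Measure.map_apply (by fun_prop) (measurableSet_le (by fun_prop) (by fun_prop)),
    Measure.map_apply (by fun_prop) (measurableSet_le (by fun_prop) (by fun_prop))]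
  congr 1
  ext x
  have hsum : ∑ j, a j * (δ j.1 + R j.1.succ ⬝ᵥ x) =
      ∑ j, a j * δ j + (a ᵥ* deltaRows R s) ⬝ᵥ x := by
    rw [← dotProduct_mulVec, dotProduct, ← Finset.sum_add_distrib]
    exact Finset.sum_congr rfl fun j _ => mul_add _ _ _
  simp only [Set.mem_preimage, Set.mem_ofPred_eq, Fin.cases_zero, Fin.cases_succ]
  change _ + R 0 ⬝ᵥ x - min z (∑ j, a j * (δ j.1 + R j.1.succ ⬝ᵥ x) + c) ≤ β ↔ _
  rw [hsum, add_sub_assoc, add_le_iff_nonpos_right, sub_nonpos]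

theorem stmt5_general (k : ℕ) (α γ : ℝ) (hα : α ∈ Set.Ioo (0 : ℝ) (1 / 2))
    (Ω : Matrix (Fin (k + 1)) (Fin (k + 1)) ℝ) (hpd : Ω.PosDef) (hdiag : ∀ i, Ω i i = 1)
    (R : Matrix (Fin (k + 1)) (Fin (k + 1)) ℝ) (hR : R * Rᵀ = Ω)
    (s : Finset (Fin k)) (hann : ∀ j, 0 ≤ coefVec Ω s j)
    (ω : ℝ) (hω : ω = omegaOf Ω s) (hωmem : ω ∈ Set.Ico (0 : ℝ) 1)
    (zαγ c : ℝ)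
    (hzαγ : stdNormal (Set.Iic zαγ) = ENNReal.ofReal (1 - α + γ))
    (hc : stdNormal2 {p : ℝ × ℝ | min zαγ (Ztilde2 ω p + c) < p.1} = ENNReal.ofReal α)
    (β : ℝ) (δ : Fin k → ℝ) (hδ : ∀ i, 0 ≤ δ i)
    (A : Set (Fin (k + 1) → ℝ))
    (hA : A = {y : Fin (k + 1) → ℝ |
      y 0 - min zαγ ((∑ j : {i // i ∈ s}, coefVec Ω s j * y j.1.succ) + c) ≤ β}) :
    ENNReal.ofReal (1 - α) ≤ gaussLaw R β δ A ∧
    gaussLaw R β δ A ≤ ENNReal.ofReal (1 - α + γ) := by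
  have huu : R 0 ⬝ᵥ R 0 = 1 := (row_dotProduct_row hR 0 0).trans (hdiag 0)
  have hlaw := map_pi_stdNormal_dotProduct_pair_eq_Ztilde2 ⟨hωmem.1, hωmem.2.le⟩ huu
    (hω ▸ row_zero_dotProduct_coefVec_vecMul hR) (hω ▸ coefVec_vecMul_dotProduct_self hpd hR)
  have hd : 0 ≤ ∑ j, coefVec Ω s j * δ j :=
    Finset.sum_nonneg fun j _ => mul_nonneg (hann j) (hδ j)
  rw [hA, gaussLaw_setOf_sub_min_le, hlaw]
  constructor
  · calc ENNReal.ofReal (1 - α) = 1 - stdNormal2 {p | min zαγ (Ztilde2 ω p + c) < p.1} := by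
          rw [hc, ENNReal.ofReal_sub _ hα.1.le, ENNReal.ofReal_one]
      _ = _ := (map_Ztilde2_setOf_le_min ω zαγ c).symm
      _ ≤ _ := measure_mono fun q (hq : q.1 ≤ _) =>
          hq.trans (min_le_min_left _ (by linarith))
  · calc _ ≤ stdNormal2.map (fun p => (p.1, Ztilde2 ω p)) {q | q.1 ≤ zαγ} :=
          measure_mono fun q (hq : q.1 ≤ _) => hq.trans (min_le_left _ _)
      _ = _ := by rw [map_Ztilde2_setOf_fst_le, hzαγ]

/-- coverage bounds `1 - α ≤ P(β ≥ Yβ - min{z_{1-α+γ}, a·Yδ⁽ˢ⁾ + c(ω)}) ≤ 1 - α + γ`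
for any index subset `s` whose coefficient vector `a = Ω_{βδ⁽ˢ⁾} Ω_{δ⁽ˢ⁾δ⁽ˢ⁾}⁻¹` is non-negative,
uniformly over `β ∈ ℝ` and `δ ≥ 0`. -/
theorem stmt5 (k : ℕ) (α γ : ℝ) (hα : α ∈ Set.Ioo (0 : ℝ) (1 / 2)) (hγ : γ ∈ Set.Ioo 0 α)
    (Ω : Matrix (Fin (k + 1)) (Fin (k + 1)) ℝ) (hpd : Ω.PosDef) (hdiag : ∀ i, Ω i i = 1)
    (R : Matrix (Fin (k + 1)) (Fin (k + 1)) ℝ) (hR : R * Rᵀ = Ω)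
    (s : Finset (Fin k)) (hann : ∀ j, 0 ≤ coefVec Ω s j)
    (ω : ℝ) (hω : ω = omegaOf Ω s) (hωmem : ω ∈ Set.Ico (0 : ℝ) 1)
    (zαγ c : ℝ)
    (hzαγ : stdNormal (Set.Iic zαγ) = ENNReal.ofReal (1 - α + γ))
    (hc : stdNormal2 {p : ℝ × ℝ | min zαγ (Ztilde2 ω p + c) < p.1} = ENNReal.ofReal α)
    (β : ℝ) (δ : Fin k → ℝ) (hδ : ∀ i, 0 ≤ δ i)
    (A : Set (Fin (k + 1) → ℝ))
    (hA : A = {y : Fin (k + 1) → ℝ |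
      y 0 - min zαγ ((∑ j : {i // i ∈ s}, coefVec Ω s j * y j.1.succ) + c) ≤ β}) :
    ENNReal.ofReal (1 - α) ≤ gaussLaw R β δ A ∧
    gaussLaw R β δ A ≤ ENNReal.ofReal (1 - α + γ) :=
  stmt5_general k α γ hα Ω hpd hdiag R hR s hann ω hω hωmem zαγ c hzαγ hc β δ hδ A hA
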